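/- Suppose v is an unlooped vertex of degree one in a looped simple graph G, pendant on a vertex w. Then the elements (v,χ) and (w,φ) are parallel (distinct, non-loop elements forming a 2-element circuit) in M(IAS(G)). -/

import Mathlib

/-- The three column types of the matrix `IAS(G) = (I | A | I+A)`. -/
inductive GType : Type
  | phi | chi | psi
  deriving DecidableEq

instance : Fintype GType where
  elems := {GType.phi, GType.chi, GType.psi}
  complete := fun x => by cases x <;> simp

/-- The column of `IAS(G) = (I | A(G) | I+A(G))` indexed by a ground set element of
`W(G) = V × {φ, χ, ψ}`. -/
def iasCol {V : Type} [DecidableEq V] (A : Matrix V V (ZMod 2)) : V × GType → V → ZMod 2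
  | (v, GType.phi) => fun w => if w = v then 1 else 0
  | (v, GType.chi) => fun w => A w v
  | (v, GType.psi) => fun w => (if w = v then 1 else 0) + A w v

/-- Independence in the binary matroid `M(IAS(G))`: a set of ground elements is independent
iff the corresponding columns of `IAS(G)` are linearly independent over `GF(2)`. -/
def IasIndep {V : Type} [DecidableEq V] (A : Matrix V V (ZMod 2))
    (S : Set (V × GType)) : Prop :=
  LinearIndependent (ZMod 2) (fun p : S => iasCol A p.1)

/-- A circuit of `M(IAS(G))`: a minimal dependent set. -/
def IasCircuit {V : Type} [DecidableEq V] (A : Matrix V V (ZMod 2))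
    (C : Set (V × GType)) : Prop :=
  ¬ IasIndep A C ∧ ∀ D : Set (V × GType), D ⊂ C → IasIndep A D

/-- The rank of a subset of the ground set of `M(IAS(G))`: the `GF(2)`-rank of the
corresponding set of columns of `IAS(G)`. -/
noncomputable def iasRk {V : Type} [Fintype V] [DecidableEq V] (A : Matrix V V (ZMod 2))
    (S : Set (V × GType)) : ℕ :=
  Module.finrank (ZMod 2) (Submodule.span (ZMod 2) (iasCol A '' S))

theorem Set.Subsingleton.of_ssubset_pair {α : Type*} {a b : α} {D : Set α} (hD : D ⊂ {a, b}) :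
    D.Subsingleton := by
  intro x hx y hy
  by_contra hxy
  refine hD.not_subset (Set.insert_subset_iff.2 ⟨?_, Set.singleton_subset_iff.2 ?_⟩) <;>
    rcases hD.subset hx with rfl | rfl <;> rcases hD.subset hy with rfl | rfl <;> simp_all

theorem iasCircuit_pair_of_iasCol_eq {V : Type} [DecidableEq V] (A : Matrix V V (ZMod 2))
    {a b : V × GType} (hab : a ≠ b) (hcol : iasCol A a = iasCol A b) (hne : iasCol A a ≠ 0) :
    IasCircuit A {a, b} := by
  refine ⟨fun hind => hab ?_, fun D hD => ?_⟩
  · have hb : b ∈ ({a, b} : Set (V × GType)) := Set.mem_insert_of_mem _ rfl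
    exact congrArg Subtype.val (hind.injective (a₁ := ⟨a, Set.mem_insert _ _⟩) (a₂ := ⟨b, hb⟩) hcol)
  · have : Subsingleton D := (Set.Subsingleton.of_ssubset_pair hD).coe_sort
    refine (linearIndependent_subsingleton_index_iff _).2 fun ⟨p, hp⟩ => ?_
    rcases hD.subset hp with rfl | rfl
    · exact hne
    · exact hcol ▸ hne

theorem iasCol_phi_ne_zero {V : Type} [DecidableEq V] (A : Matrix V V (ZMod 2)) (w : V) :
    iasCol A (w, GType.phi) ≠ 0 := fun h => by
  simpa [iasCol] using congrFun h w

theorem iasCol_chi_eq_phi_of_pendant {V : Type} [DecidableEq V] (A : Matrix V V (ZMod 2))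
    {v w : V} (hN : ∀ u, A u v = 1 ↔ u = w) :
    iasCol A (v, GType.chi) = iasCol A (w, GType.phi) := by
  funext u
  simp only [iasCol]
  split_ifs with huw
  · exact (hN u).2 huw
  · have hne : A u v ≠ 1 := fun h => huw ((hN u).1 h)
    -- over `GF(2)` an entry other than `1` is `0`
    generalize A u v = x at hne
    revert x; decide

theorem pendant_parallel_general {V : Type} [DecidableEq V]
    (A : Matrix V V (ZMod 2)) (v w : V)
    (hN : ∀ u, A u v = 1 ↔ u = w) :
    IasCircuit A {(v, GType.chi), (w, GType.phi)} ∧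
      iasCol A (v, GType.chi) = iasCol A (w, GType.phi) ∧
      iasCol A (v, GType.chi) ≠ 0 := by
  have hcol := iasCol_chi_eq_phi_of_pendant A hN
  have hne : iasCol A (v, GType.chi) ≠ 0 := hcol ▸ iasCol_phi_ne_zero A w
  exact ⟨iasCircuit_pair_of_iasCol_eq A (by simp) hcol hne, hcol, hne⟩

/-- if `v` is an unlooped degree-one vertex pendant on `w`, then `(v,χ)` and
`(w,φ)` are parallel in `M(IAS(G))`: they are distinct non-loop elements forming a
2-element circuit (equivalently, equal nonzero columns). -/
theorem pendant_parallel {V : Type} [Fintype V] [DecidableEq V]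
    (A : Matrix V V (ZMod 2)) (hA : A.IsSymm) (v w : V) (hvw : v ≠ w)
    (hloop : A v v = 0) (hN : ∀ u, A u v = 1 ↔ u = w) :
    IasCircuit A {(v, GType.chi), (w, GType.phi)} ∧
      iasCol A (v, GType.chi) = iasCol A (w, GType.phi) ∧
      iasCol A (v, GType.chi) ≠ 0 :=
  pendant_parallel_general A v w hN
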